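/- arXiv:2407.10509 — 3 statements merged into one kernel-verified Lean document; each statement's English description precedes it below -/
import Mathlib

section
/- Let X = ℓ², P = {x ∈ ℓ² : n·x₁ ≥ |xₙ| for all n ≥ 2}, and K = (−P) ∩ B_X. Then 0 is not a strictly maximal element of K: there exists ε > 0 (e.g. ε = 1/2) such that for every δ > 0 one has (P + δB_X) ∩ K ⊄ εB_X. -/
/-!
Let `eₖ` be the unit vectors and `m ≥ 1`. With `a = 1/(2(m+1))`, the vector `z = -a e₀ + ½ eₘ`
lies in `K`, since `-z = a e₀ - ½ eₘ` satisfies the single nontrivial constraint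
`½ ≤ (m+1) a` of the cone. It also lies within `2a = 1/(m+1)` of the point `a e₀ + ½ eₘ` of
the cone, yet `‖z‖ ≥ ½`. Letting `m → ∞` shows that no `δ` works for `ε < ½`.
-/

open scoped Pointwise

local notation "ℓ²" => lp (fun _ : ℕ => ℝ) 2

def weightedCone : Set ℓ² := {x | ∀ i : ℕ, 1 ≤ i → |x i| ≤ ((i : ℝ) + 1) * x 0}

noncomputable def spike (m : ℕ) (s t : ℝ) : ℓ² := lp.single 2 0 s + lp.single 2 m t

section spike

variable {m : ℕ} (s t : ℝ)

theorem spike_apply_zero (hm : m ≠ 0) : spike m s t 0 = s := by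
  simp [spike, hm.symm]

theorem spike_apply_self (hm : m ≠ 0) : spike m s t m = t := by
  simp [spike, hm]

theorem spike_apply_of_ne {i : ℕ} (h0 : i ≠ 0) (hm : i ≠ m) : spike m s t i = 0 := by
  simp [spike, h0, hm]

theorem neg_spike : -spike m s t = spike m (-s) (-t) := by
  simp [spike, add_comm]

theorem spike_sub_spike (s' : ℝ) : spike m s t - spike m s' t = lp.single 2 0 (s - s') := by
  simp [spike]

theorem norm_spike_le : ‖spike m s t‖ ≤ |s| + |t| := by
  have hp : (0 : ENNReal) < 2 := by norm_num
  calc ‖spike m s t‖ ≤ ‖(lp.single 2 0 s : ℓ²)‖ + ‖(lp.single 2 m t : ℓ²)‖ := norm_add_le _ _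
    _ = |s| + |t| := by rw [lp.norm_single hp, lp.norm_single hp, Real.norm_eq_abs,
      Real.norm_eq_abs]

variable {s t} {a : ℝ}

theorem spike_mem_weightedCone (hm : m ≠ 0) (h : |t| ≤ ((m : ℝ) + 1) * s) :
    spike m s t ∈ weightedCone := by
  intro i hi
  rw [spike_apply_zero s t hm]
  rcases eq_or_ne i m with rfl | him
  · rwa [spike_apply_self s t hm]
  · have hs : 0 ≤ s := nonneg_of_mul_nonneg_right ((abs_nonneg t).trans h) (by positivity)
    rw [spike_apply_of_ne s t (by omega) him, abs_zero]
    positivity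

theorem spike_neg_mem_weightedCone_add_closedBall (hm : m ≠ 0) (h : |t| ≤ ((m : ℝ) + 1) * a) :
    spike m (-a) t ∈ weightedCone + Metric.closedBall 0 (2 * a) := by
  have ha : 0 ≤ a := nonneg_of_mul_nonneg_right ((abs_nonneg t).trans h) (by positivity)
  refine ⟨spike m a t, spike_mem_weightedCone hm h, lp.single 2 0 (-2 * a), ?_, ?_⟩
  · rw [Metric.mem_closedBall, dist_zero_right, lp.norm_single (by norm_num),
      Real.norm_eq_abs, abs_of_nonpos (by linarith)]
    linarith
  · rw [← eq_sub_iff_add_eq', spike_sub_spike]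
    ring_nf

theorem spike_neg_mem_neg_weightedCone (hm : m ≠ 0) (h : |t| ≤ ((m : ℝ) + 1) * a) :
    spike m (-a) t ∈ -weightedCone := by
  rw [Set.mem_neg, neg_spike, neg_neg]
  exact spike_mem_weightedCone hm (by rwa [abs_neg])

end spike

theorem exists_mem_weightedCone_add_closedBall_inter_norm_ge {δ : ℝ} (hδ : 0 < δ) :
    ∃ z ∈ (weightedCone + Metric.closedBall 0 δ) ∩ ((-weightedCone) ∩ Metric.closedBall 0 1),
      (1 / 2 : ℝ) ≤ ‖z‖ := by
  obtain ⟨n, hn⟩ := exists_nat_one_div_lt hδ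
  set m := n + 1
  have hm : m ≠ 0 := n.succ_ne_zero
  have hm_ge : (1 : ℝ) ≤ m := by exact_mod_cast Nat.one_le_iff_ne_zero.mpr hm
  set a : ℝ := 1 / (2 * ((m : ℝ) + 1)) with ha_def
  have ha : 0 < a := by positivity
  have hcone : |(1 / 2 : ℝ)| ≤ ((m : ℝ) + 1) * a := by
    rw [abs_of_pos one_half_pos, ha_def, mul_one_div, mul_comm 2, ← div_div,
      div_self (by positivity)]
  have ha_le : a ≤ 1 / 4 := by
    rw [ha_def, div_le_div_iff₀ (by positivity) (by norm_num)]
    linarith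
  have h2a : 2 * a ≤ δ := by
    have : (1 : ℝ) / (m + 1) ≤ 1 / (n + 1) := by
      gcongr; push_cast [m]; linarith
    calc 2 * a = 1 / (m + 1) := by rw [ha_def]; field_simp
      _ ≤ δ := by linarith
  refine ⟨spike m (-a) (1 / 2), ⟨?_, spike_neg_mem_neg_weightedCone hm hcone, ?_⟩, ?_⟩
  · exact Set.add_subset_add_left (Metric.closedBall_subset_closedBall h2a)
      (spike_neg_mem_weightedCone_add_closedBall hm hcone)
  · rw [Metric.mem_closedBall, dist_zero_right]
    refine (norm_spike_le _ _).trans ?_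
    rw [abs_neg, abs_of_pos ha, abs_of_pos one_half_pos]
    linarith
  · calc (1 / 2 : ℝ) = ‖spike m (-a) (1 / 2) m‖ := by
          rw [spike_apply_self _ _ hm, Real.norm_eq_abs, abs_of_pos one_half_pos]
      _ ≤ ‖spike m (-a) (1 / 2)‖ := lp.norm_apply_le_norm two_ne_zero _ _

/-- In `X = ℓ²` (paper coordinate `n` is Lean index `n - 1`), with
`P = {x : n·x₁ ≥ |xₙ| for all n ≥ 2}` and `K = (−P) ∩ B_X`, the point `0` is not a
strictly maximal element of `K`: there is `ε > 0` (e.g. `ε = 1/2`) such that for every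
`δ > 0`, `(P + δB_X) ∩ (K − 0) ⊄ εB_X`. -/
theorem stmt6 :
    let X := lp (fun _ : ℕ => ℝ) 2
    let P : Set X := {x | ∀ i : ℕ, 1 ≤ i → |x i| ≤ ((i : ℝ) + 1) * x 0}
    let K : Set X := (-P) ∩ Metric.closedBall 0 1
    ∃ ε > (0 : ℝ), ∀ δ > (0 : ℝ),
      ¬ (P + Metric.closedBall (0 : X) δ) ∩ K ⊆ Metric.closedBall (0 : X) ε := by
  intro X P K
  refine ⟨1 / 3, by norm_num, fun δ hδ hsub => ?_⟩
  obtain ⟨z, hz, hz_norm⟩ := exists_mem_weightedCone_add_closedBall_inter_norm_ge hδ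
  have hz_small : ‖z‖ ≤ 1 / 3 := by simpa using hsub hz
  linarith
end

section
/- Let X = (c₀, |||·|||) with |||x||| = ‖x‖_∞ + ‖(xₙ/2ⁿ)ₙ‖₂, K its closed unit ball, and P = (c₀)₊. Then no point of K is strictly maximal for (K,P): StMax(K,P) = ∅. -/
/-!
Given `x ∈ K` and `0 < c ≤ 1/2`, take `z = e_m / 8 - c • x` for a suitable `m`. Then `z` lies
within `|||c • x||| ≤ c` of the positive cone, yet `|||z||| ≥ |z m| ≥ 1/16`, and
`x + z = (1 - c) • x + e_m / 8` stays in `K`. For the last point: the weighted `ℓ²` part `θ` of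
`|||x|||` is at most `‖x‖∞`, hence `θ ≤ 1/2`, so the sup-norm budget `1 - θ ≥ 1/2` absorbs a bump
of height `1/8` at a coordinate where `|x m| ≤ 1/8`; in the `ℓ²` part the bump costs only
`2⁻ᵐ⁻⁴`, which for large `m` is at most the `c` freed by shrinking `x`.
-/

open scoped ZeroAtInfty

namespace ZeroAtInftyContinuousMap

variable {α E : Type*} [TopologicalSpace α] [NormedAddCommGroup E]

lemma norm_apply_le (f : C₀(α, E)) (a : α) : ‖f a‖ ≤ ‖f‖ :=
  BoundedContinuousFunction.norm_coe_le_norm f.toBCF a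

lemma norm_le_of_forall_norm_apply_le {f : C₀(α, E)} {M : ℝ} (hM : 0 ≤ M)
    (h : ∀ a, ‖f a‖ ≤ M) : ‖f‖ ≤ M := by
  rw [← norm_toBCF_eq_norm]
  exact (BoundedContinuousFunction.norm_le hM).2 h

variable [DiscreteTopology α] [DecidableEq α]

def single (a : α) (b : E) : C₀(α, E) where
  toFun := (Pi.single a b : α → E)
  continuous_toFun := continuous_of_discreteTopology
  zero_at_infty' := by
    rw [Filter.cocompact_eq_cofinite]
    refine tendsto_const_nhds.congr' ?_
    filter_upwards [Filter.eventually_cofinite_ne a] with a' ha'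
    exact (Pi.single_eq_of_ne (M := fun _ => E) ha' b).symm

@[simp]
lemma single_apply (a : α) (b : E) (a' : α) : single a b a' = (Pi.single a b : α → E) a' := rfl

end ZeroAtInftyContinuousMap

open ZeroAtInftyContinuousMap

lemma sq_div_two_pow_le (x : C₀(ℕ, ℝ)) (n : ℕ) :
    (x n / 2 ^ (n + 1)) ^ 2 ≤ ‖x‖ ^ 2 / 2 / 2 ^ n := by
  have hx : (x n) ^ 2 ≤ ‖x‖ ^ 2 := by
    simpa only [Real.norm_eq_abs, sq_abs] using
      pow_le_pow_left₀ (norm_nonneg _) (norm_apply_le x n) 2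
  have h2 : (2 : ℝ) ^ (n + 1) ≤ (2 ^ (n + 1)) ^ 2 := by
    nlinarith [one_le_pow₀ (M₀ := ℝ) (n := n + 1) one_le_two]
  rw [div_pow, div_div, ← pow_succ']
  gcongr

lemma summable_sq_div_two_pow (x : C₀(ℕ, ℝ)) : Summable fun n => (x n / 2 ^ (n + 1)) ^ 2 :=
  .of_nonneg_of_le (fun _ => sq_nonneg _) (sq_div_two_pow_le x) (summable_geometric_two' _)

lemma tsum_sq_div_two_pow_le (x : C₀(ℕ, ℝ)) : ∑' n, (x n / 2 ^ (n + 1)) ^ 2 ≤ ‖x‖ ^ 2 :=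
  ((summable_sq_div_two_pow x).tsum_le_tsum (sq_div_two_pow_le x)
    (summable_geometric_two' _)).trans_eq (tsum_geometric_two' _)

noncomputable def dyadicWeight : C₀(ℕ, ℝ) →ₗ[ℝ] lp (fun _ : ℕ => ℝ) 2 where
  toFun x := ⟨fun n => x n / 2 ^ (n + 1), memℓp_gen <| by
    simpa [Real.rpow_two, div_pow] using summable_sq_div_two_pow x⟩
  map_add' x y := by ext n; exact add_div (x n) (y n) _
  map_smul' c x := by ext n; exact mul_div_assoc c (x n) _

@[simp]
lemma dyadicWeight_apply (x : C₀(ℕ, ℝ)) (n : ℕ) : dyadicWeight x n = x n / 2 ^ (n + 1) := rfl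

lemma norm_dyadicWeight (x : C₀(ℕ, ℝ)) :
    ‖dyadicWeight x‖ = √(∑' n, (x n / 2 ^ (n + 1)) ^ 2) := by
  have h := lp.norm_rpow_eq_tsum (p := 2) (by norm_num) (dyadicWeight x)
  simp only [ENNReal.toReal_ofNat, Real.rpow_two, Real.norm_eq_abs, sq_abs,
    dyadicWeight_apply] at h
  rw [← h, Real.sqrt_sq (norm_nonneg _)]

lemma norm_dyadicWeight_le (x : C₀(ℕ, ℝ)) : ‖dyadicWeight x‖ ≤ ‖x‖ := by
  rw [norm_dyadicWeight]
  exact Real.sqrt_le_iff.2 ⟨norm_nonneg x, tsum_sq_div_two_pow_le x⟩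

lemma dyadicWeight_single (m : ℕ) (t : ℝ) :
    dyadicWeight (single m t) = lp.single 2 m (t / 2 ^ (m + 1)) := by
  ext n
  by_cases h : n = m
  · subst h; simp
  · simp [h]

noncomputable def tripleNorm (x : C₀(ℕ, ℝ)) : ℝ := ‖x‖ + ‖dyadicWeight x‖

lemma tripleNorm_smul (c : ℝ) (x : C₀(ℕ, ℝ)) : tripleNorm (c • x) = |c| * tripleNorm x := by
  rw [tripleNorm, tripleNorm, map_smul, norm_smul, norm_smul, Real.norm_eq_abs, mul_add]

lemma norm_le_tripleNorm (x : C₀(ℕ, ℝ)) : ‖x‖ ≤ tripleNorm x :=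
  le_add_of_nonneg_right (norm_nonneg _)

lemma norm_smul_add_single_le {x : C₀(ℕ, ℝ)} {s c : ℝ} {m : ℕ} (hxs : ‖x‖ ≤ s)
    (hs : 1 / 2 ≤ s) (hc : c ≤ 1 / 2) (hxm : |x m| ≤ 1 / 8) :
    ‖(1 - c) • x + single m (1 / 8 : ℝ)‖ ≤ (1 - c) * s := by
  refine norm_le_of_forall_norm_apply_le (by nlinarith) fun n => ?_
  have hxn : |x n| ≤ s := by simpa using (norm_apply_le x n).trans hxs
  rw [Real.norm_eq_abs, ZeroAtInftyContinuousMap.add_apply, ZeroAtInftyContinuousMap.smul_apply,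
    single_apply, smul_eq_mul]
  by_cases hn : n = m
  · subst hn
    rw [Pi.single_eq_same]
    have h := abs_add_le ((1 - c) * x n) (1 / 8)
    rw [abs_mul, abs_of_nonneg (by linarith : 0 ≤ 1 - c),
      abs_of_pos (by norm_num : (0 : ℝ) < 1 / 8)] at h
    nlinarith
  · rw [Pi.single_eq_of_ne hn, add_zero, abs_mul, abs_of_nonneg (by linarith)]
    exact mul_le_mul_of_nonneg_left hxn (by linarith)

lemma norm_dyadicWeight_smul_add_single_le (x : C₀(ℕ, ℝ)) {c : ℝ} (hc : c ≤ 1) (m : ℕ)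
    (t : ℝ) :
    ‖dyadicWeight ((1 - c) • x + single m t)‖
      ≤ (1 - c) * ‖dyadicWeight x‖ + |t| / 2 ^ (m + 1) := by
  calc ‖dyadicWeight ((1 - c) • x + single m t)‖
      ≤ ‖(1 - c) • dyadicWeight x‖ + ‖dyadicWeight (single m t)‖ := by
        rw [map_add, map_smul]; exact norm_add_le _ _
    _ = (1 - c) * ‖dyadicWeight x‖ + |t| / 2 ^ (m + 1) := by
        rw [norm_smul, dyadicWeight_single, lp.norm_single (by norm_num),
          Real.norm_of_nonneg (by linarith : 0 ≤ 1 - c), norm_div, norm_pow, Real.norm_two,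
          Real.norm_eq_abs]

lemma tripleNorm_smul_add_single_le {x : C₀(ℕ, ℝ)} (hx : tripleNorm x ≤ 1) {c : ℝ}
    (hc : c ≤ 1 / 2) {m : ℕ} (hxm : |x m| ≤ 1 / 8) (hm : 1 / 8 / 2 ^ (m + 1) ≤ c) :
    tripleNorm ((1 - c) • x + single m (1 / 8 : ℝ)) ≤ 1 := by
  rw [tripleNorm] at hx ⊢
  have hW : ‖dyadicWeight x‖ ≤ 1 / 2 := by linarith [norm_dyadicWeight_le x]
  have hsup := norm_smul_add_single_le (s := 1 - ‖dyadicWeight x‖) (by linarith) (by linarith)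
    hc hxm
  have hweight := norm_dyadicWeight_smul_add_single_le x (by linarith : c ≤ 1) m (1 / 8)
  rw [abs_of_pos (by norm_num)] at hweight
  linarith

lemma exists_abs_apply_le_and_div_two_pow_le (x : C₀(ℕ, ℝ)) (b : ℝ) {a c : ℝ} (ha : 0 < a)
    (hc : 0 < c) : ∃ m : ℕ, |x m| ≤ a ∧ b / 2 ^ (m + 1) ≤ c := by
  have hx : Filter.Tendsto x Filter.atTop (nhds 0) := by
    simpa [Filter.cocompact_eq_cofinite, Nat.cofinite_eq_atTop] using
      ZeroAtInftyContinuousMapClass.zero_at_infty x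
  have hpow : Filter.Tendsto (fun m : ℕ => b / 2 ^ (m + 1)) Filter.atTop (nhds 0) :=
    tendsto_const_nhds.div_atTop <|
      (tendsto_pow_atTop_atTop_of_one_lt one_lt_two).comp (Filter.tendsto_add_atTop_nat 1)
  have hxa : ∀ᶠ m in Filter.atTop, |x m| ≤ a := by
    simpa using hx.abs.eventually_le_const (by simpa using ha)
  exact (hxa.and (hpow.eventually_le_const hc)).exists

lemma one_div_sixteen_le_norm_single_sub_smul {x : C₀(ℕ, ℝ)} {c : ℝ} {m : ℕ} (hc0 : 0 ≤ c)
    (hc : c ≤ 1 / 2) (hxm : |x m| ≤ 1 / 8) : 1 / 16 ≤ ‖single m (1 / 8 : ℝ) - c • x‖ := by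
  have hcx : |c * x m| ≤ 1 / 16 := by
    rw [abs_mul, abs_of_nonneg hc0]; nlinarith [abs_nonneg (x m)]
  calc (1 / 16 : ℝ) ≤ |1 / 8 - c * x m| := by
        linarith [abs_sub_abs_le_abs_sub (1 / 8 : ℝ) (c * x m),
          abs_of_pos (by norm_num : (0 : ℝ) < 1 / 8)]
    _ = ‖(single m (1 / 8 : ℝ) - c • x) m‖ := by simp
    _ ≤ ‖single m (1 / 8 : ℝ) - c • x‖ := norm_apply_le _ m

/-- In `X = (c₀, |||·|||)` with `|||x||| = ‖x‖∞ + ‖(xₙ/2ⁿ)ₙ‖₂`, `K` the closed unit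
ball of `|||·|||` and `P = (c₀)₊`, no point of `K` is strictly maximal for `(K, P)`:
`StMax(K, P) = ∅`.  (Here `δB_X` and `εB_X` are balls of the norm `|||·|||`.) -/
theorem stmt12 :
    let N : C₀(ℕ, ℝ) → ℝ := fun x => ‖x‖ + Real.sqrt (∑' n : ℕ, (x n / 2 ^ (n + 1)) ^ 2)
    let K : Set C₀(ℕ, ℝ) := {x | N x ≤ 1}
    let P : Set C₀(ℕ, ℝ) := {x | ∀ n : ℕ, 0 ≤ x n}
    ∀ x ∈ K, ¬ (∀ ε > (0 : ℝ), ∃ δ > (0 : ℝ),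
      ∀ z : C₀(ℕ, ℝ), (∃ p ∈ P, N (z - p) ≤ δ) → x + z ∈ K → N z ≤ ε) := by
  intro N K P x hx hmax
  have hN : ∀ y, N y = tripleNorm y := fun y => by rw [tripleNorm, norm_dyadicWeight]
  have hx1 : tripleNorm x ≤ 1 := hN x ▸ hx
  obtain ⟨δ, hδ, hsmall⟩ := hmax (1 / 32) (by norm_num)
  set c := min δ (1 / 2)
  have hc0 : 0 < c := lt_min hδ (by norm_num)
  have hc : c ≤ 1 / 2 := min_le_right _ _
  obtain ⟨m, hxm, hm⟩ :=
    exists_abs_apply_le_and_div_two_pow_le x (1 / 8) (by norm_num : (0 : ℝ) < 1 / 8) hc0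
  set p := single m (1 / 8 : ℝ)
  have hp : p ∈ P := fun n =>
    (Pi.single_nonneg.2 (by norm_num) : (0 : ℕ → ℝ) ≤ Pi.single m (1 / 8 : ℝ)) n
  have hnear : N (p - c • x - p) ≤ δ := by
    rw [hN, show p - c • x - p = (-c) • x by module, tripleNorm_smul, abs_neg, abs_of_pos hc0]
    exact (mul_le_of_le_one_right hc0.le hx1).trans (min_le_left _ _)
  have hmove : x + (p - c • x) ∈ K := by
    change N _ ≤ 1
    rw [hN, show x + (p - c • x) = (1 - c) • x + p by module]
    exact tripleNorm_smul_add_single_le hx1 hc hxm hm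
  have hz := hsmall _ ⟨p, hp, hnear⟩ hmove
  rw [hN] at hz
  linarith [norm_le_tripleNorm (p - c • x), one_div_sixteen_le_norm_single_sub_smul hc0.le hc hxm]
end

section
/- Let X = ℓ², P = ℓ²₊, and K = {x ∈ ℓ² : x₁ + xₙ² ≤ 0 for all n ≥ 2}. If x ∈ K with ‖x‖ < 1 and x ≠ 0, then x is not P-maximal in K: there exist n₀ ≥ 2 and ε > 0 such that the segment [x − ε e_{n₀}, x + ε e_{n₀}] is contained in K, and hence (x + P) ∩ K ≠ {x}. Therefore Max(K,P) ∩ U_X = {0}, where U_X is the open unit ball. -/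
/-!
Coordinates of a point of `ℓ²` tend to `0`, while a nonzero `x ∈ K` has `x₁ < 0`. So some
coordinate `xₙ` with `n ≥ 2` satisfies `|xₙ| < √|x₁| / 2`, and moving `x` along `eₙ` by at most
`√|x₁| / 2` keeps `xₙ² ≤ |x₁|`, i.e. stays in `K`. On the other hand `K ∩ P = {0}`, so `0` is
`P`-maximal.
-/

open Filter
open scoped Pointwise lp

theorem Memℓp.eventually_norm_lt {α : Type*} {E : α → Type*} [∀ i, NormedAddCommGroup (E i)]
    {p : ENNReal} {f : ∀ i, E i} (hf : Memℓp f p) (hp : 0 < p.toReal) {δ : ℝ} (hδ : 0 < δ) :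
    ∀ᶠ i in cofinite, ‖f i‖ < δ := by
  filter_upwards [(hf.summable hp).tendsto_cofinite_zero.eventually_lt_const
    (Real.rpow_pos_of_pos hδ p.toReal)] with i hi
  exact (Real.rpow_lt_rpow_iff (norm_nonneg _) hδ.le hp).1 hi

theorem Set.inter_singleton_add_ne_singleton {E : Type*} [AddCommGroup E] {S P : Set E} {x v : E}
    (hxv : x + v ∈ S) (hv : v ∈ P) (hv0 : v ≠ 0) : S ∩ ({x} + P) ≠ {x} := by
  intro h
  have hmem : x + v ∈ S ∩ ({x} + P) := ⟨hxv, Set.add_mem_add rfl hv⟩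
  rw [h, Set.mem_singleton_iff, add_eq_left] at hmem
  exact hv0 hmem

/-- Paper coordinate `n` is index `n - 1` here. -/
def parabolicSet : Set ℓ²(ℕ, ℝ) := {x | ∀ i : ℕ, 1 ≤ i → x 0 + x i ^ 2 ≤ 0}

theorem eq_zero_of_mem_parabolicSet_of_nonneg {x : ℓ²(ℕ, ℝ)} (hx : x ∈ parabolicSet)
    (h0 : 0 ≤ x 0) : x = 0 := by
  ext i
  rw [lp.coeFn_zero, Pi.zero_apply]
  rcases i with _ | i
  · exact le_antisymm (by nlinarith [hx 1 le_rfl, sq_nonneg (x 1)]) h0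
  · exact pow_eq_zero_iff two_ne_zero |>.1 <|
      le_antisymm (by linarith [hx (i + 1) (Nat.le_add_left 1 i)]) (sq_nonneg _)

theorem coord_zero_neg_of_mem_parabolicSet {x : ℓ²(ℕ, ℝ)} (hx : x ∈ parabolicSet)
    (hx0 : x ≠ 0) : x 0 < 0 :=
  lt_of_not_ge fun h => hx0 (eq_zero_of_mem_parabolicSet_of_nonneg hx h)

theorem lp.coe_smul_single_one (n : ℕ) (t : ℝ) :
    ⇑(t • lp.single 2 n (1 : ℝ) : ℓ²(ℕ, ℝ)) = Pi.single n t := by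
  rw [lp.coeFn_smul, lp.coeFn_single, ← Pi.single_smul, smul_eq_mul, mul_one]

theorem add_smul_single_mem_parabolicSet {x : ℓ²(ℕ, ℝ)} (hx : x ∈ parabolicSet) {n : ℕ}
    (hn : 1 ≤ n) {t : ℝ} (ht : (x n + t) ^ 2 ≤ -x 0) :
    x + t • lp.single 2 n (1 : ℝ) ∈ parabolicSet := by
  intro i hi
  have h0 : (0 : ℕ) ≠ n := by omega
  simp only [lp.coeFn_add, lp.coe_smul_single_one, Pi.add_apply, Pi.single_apply, if_neg h0,
    add_zero]
  split_ifs with hin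
  · subst hin
    linarith
  · simpa using hx i hi

theorem exists_segment_subset_parabolicSet {x : ℓ²(ℕ, ℝ)} (hx : x ∈ parabolicSet) (hx0 : x ≠ 0) :
    ∃ n₀ : ℕ, 1 ≤ n₀ ∧ ∃ ε > (0 : ℝ),
      ∀ t : ℝ, |t| ≤ ε → x + t • lp.single 2 n₀ (1 : ℝ) ∈ parabolicSet := by
  have ha : 0 < -x 0 := neg_pos.2 (coord_zero_neg_of_mem_parabolicSet hx hx0)
  set ε := √(-x 0) / 2
  have hε : 0 < ε := by positivity
  obtain ⟨n₀, hsmall, hn₀⟩ := (((lp.memℓp x).eventually_norm_lt (by norm_num) hε).and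
    (Nat.cofinite_eq_atTop ▸ eventually_ge_atTop 1)).exists
  refine ⟨n₀, hn₀, ε, hε, fun t ht => add_smul_single_mem_parabolicSet hx hn₀ ?_⟩
  have hsum : |x n₀ + t| ≤ √(-x 0) := calc
    |x n₀ + t| ≤ |x n₀| + |t| := abs_add_le _ _
    _ ≤ ε + ε := add_le_add (Real.norm_eq_abs (x n₀) ▸ hsmall.le) ht
    _ = √(-x 0) := add_halves _
  exact (Real.sq_le ha.le).2 (abs_le.1 hsum)

theorem parabolicSet_inter_nonneg_eq_zero :
    parabolicSet ∩ ({0} + {x : ℓ²(ℕ, ℝ) | ∀ i, 0 ≤ x i}) = {0} := by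
  rw [Set.singleton_zero, zero_add]
  ext y
  constructor
  · rintro ⟨hyK, hy⟩
    exact eq_zero_of_mem_parabolicSet_of_nonneg hyK (hy 0)
  · rintro rfl
    exact ⟨fun i _ => by simp, fun i => by simp⟩

/-- In `X = ℓ²` (paper coordinate `n` is Lean index `n - 1`) with `P = ℓ²₊` and
`K = {x : x₁ + xₙ² ≤ 0 for all n ≥ 2}`: every `x ∈ K` with `‖x‖ < 1`, `x ≠ 0`, admits
`n₀ ≥ 2` and `ε > 0` with the segment `[x − ε e_{n₀}, x + ε e_{n₀}] ⊆ K`, hence is not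
`P`-maximal; therefore `Max(K, P) ∩ U_X = {0}` (`U_X` the open unit ball). -/
theorem stmt16 :
    let X := lp (fun _ : ℕ => ℝ) 2
    let P : Set X := {x | ∀ i : ℕ, 0 ≤ x i}
    let K : Set X := {x | ∀ i : ℕ, 1 ≤ i → x 0 + (x i) ^ 2 ≤ 0}
    (∀ x ∈ K, ‖x‖ < 1 → x ≠ 0 →
      (∃ n₀ : ℕ, 1 ≤ n₀ ∧ ∃ ε > (0 : ℝ),
          (∀ t : ℝ, |t| ≤ ε → x + t • (lp.single 2 n₀ (1 : ℝ) : X) ∈ K)) ∧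
        K ∩ (({x} : Set X) + P) ≠ {x}) ∧
      {x ∈ K | ‖x‖ < 1 ∧ K ∩ (({x} : Set X) + P) = {x}} = {0} := by
  intro X P K
  have not_maximal : ∀ x ∈ K, x ≠ 0 → K ∩ ({x} + P) ≠ {x} := fun x hx hx0 => by
    obtain ⟨n₀, -, ε, hε, hseg⟩ := exists_segment_subset_parabolicSet hx hx0
    refine Set.inter_singleton_add_ne_singleton (hseg ε (abs_of_pos hε).le) (fun i => ?_) ?_
    · rw [lp.coe_smul_single_one]
      by_cases hi : i = n₀ <;> simp [hi, hε.le]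
    · intro h
      simpa [lp.coe_smul_single_one, hε.ne'] using congrArg (fun v : X => v n₀) h
  refine ⟨fun x hx _ hx0 => ⟨exists_segment_subset_parabolicSet hx hx0, not_maximal x hx hx0⟩, ?_⟩
  ext x
  constructor
  · rintro ⟨hx, -, hmax⟩
    by_contra hx0
    exact not_maximal x hx hx0 hmax
  · rintro rfl
    exact ⟨fun i _ => by simp, by simp, parabolicSet_inter_nonneg_eq_zero⟩
end
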